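/- Nonadaptive parallel composition (fixed template): let μ be a product distribution on W^n, τ an injective template whose blocks are disjoint with j ∈ τ^k, and F = (F₁,…,F_m) applied blockwise. Then for all v, w ∈ W and ε ≥ 0, the hockey-stick divergence of the joint outputs equals that of the k-th block alone: D_ε(μ_{j,v} K_τ K_F, μ_{j,w} K_τ K_F) = D_ε(μ_{j,v} K_{τ^k} K_{F_k}, μ_{j,w} K_{τ^k} K_{F_k}). -/

import Mathlib

/-- Hockey-stick divergence (privacy curve) of two distributions on a finite set. -/
noncomputable def hsDiv {A : Type*} [Fintype A] (ε : ℝ) (p q : A → ℝ) : ℝ :=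
  ∑ a, max 0 (p a - Real.exp ε * q a)

/-- `p` is a probability mass function on a finite set. -/
def IsPMF {A : Type*} [Fintype A] (p : A → ℝ) : Prop :=
  (∀ a, 0 ≤ p a) ∧ ∑ a, p a = 1

/-- Pushforward of a distribution through a Markov kernel. -/
noncomputable def pushKer {X A : Type*} [Fintype X] (μ : X → ℝ) (K : X → A → ℝ) : A → ℝ :=
  fun a => ∑ x, μ x * K x a

noncomputable def condProd {W : Type*} [Fintype W] [DecidableEq W] {n : ℕ}
    (μi : Fin n → W → ℝ) (j : Fin n) (v : W) : (Fin n → W) → ℝ :=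
  fun D => ∏ i, if i = j then (if D i = v then (1 : ℝ) else 0) else μi i (D i)

/-!
Under `μ_{j,u}` the coordinates of the database are independent. The `k`-th output depends only
on the coordinates in `τ k`, which contain `j`, and every other output only on coordinates outside
`τ k`. Hence the joint output law factors as (law of the `k`-th output) × `R`, where `R` is a
probability distribution on the remaining outputs that does not depend on `u`; and a common
probability factor `R` does not change the hockey-stick divergence.
-/

open Finset Function

lemma isPMF_single {A : Type*} [Fintype A] [DecidableEq A] (a : A) :
    IsPMF (Pi.single a (1 : ℝ)) :=
  ⟨fun b => by by_cases h : b = a <;> simp [h], Fintype.sum_pi_single' a 1⟩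

lemma IsPMF.pushKer {X A : Type*} [Fintype X] [Fintype A] {μ : X → ℝ} {K : X → A → ℝ}
    (hμ : IsPMF μ) (hK : ∀ x, IsPMF (K x)) : IsPMF (pushKer μ K) := by
  refine ⟨fun a => sum_nonneg fun x _ => mul_nonneg (hμ.1 x) ((hK x).1 a), ?_⟩
  simp only [_root_.pushKer]
  rw [sum_comm]
  simp only [← mul_sum, (hK _).2, mul_one, hμ.2]

lemma hsDiv_comp_equiv {α β : Type*} [Fintype α] [Fintype β] (ε : ℝ) (e : α ≃ β)
    (p q : β → ℝ) : hsDiv ε (p ∘ e) (q ∘ e) = hsDiv ε p q :=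
  e.sum_comp fun b => max 0 (p b - Real.exp ε * q b)

lemma hsDiv_mul_right_of_isPMF {B C : Type*} [Fintype B] [Fintype C] (ε : ℝ) (p q : B → ℝ)
    {r : C → ℝ} (hr : IsPMF r) :
    hsDiv ε (fun z : B × C => p z.1 * r z.2) (fun z => q z.1 * r z.2) = hsDiv ε p q := by
  have hfactor : ∀ b c, max 0 (p b * r c - Real.exp ε * (q b * r c))
      = max 0 (p b - Real.exp ε * q b) * r c := by
    intro b c
    rw [max_mul_of_nonneg _ _ (hr.1 c), zero_mul]
    ring_nf
  simp only [hsDiv, Fintype.sum_prod_type, hfactor, ← mul_sum, hr.2, mul_one]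

lemma dependsOn_one {ι W : Type*} (t : Set ι) : DependsOn (fun _ : ι → W => (1 : ℝ)) t :=
  (dependsOn_const 1).mono (Set.empty_subset t)

section ProductMeasure

variable {ι W : Type*} [Fintype ι] [DecidableEq ι] [Fintype W]

lemma sum_prod_apply_eq_one {ν : ι → W → ℝ} (hν : ∀ i, ∑ w, ν i w = 1) :
    ∑ D : ι → W, ∏ i, ν i (D i) = 1 := by
  rw [← Fintype.prod_sum]
  exact prod_eq_one fun i _ => hν i

lemma IsPMF.pi {ν : ι → W → ℝ} (hν : ∀ i, IsPMF (ν i)) :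
    IsPMF fun D : ι → W => ∏ i, ν i (D i) :=
  ⟨fun _ => prod_nonneg fun i _ => (hν i).1 _, sum_prod_apply_eq_one fun i => (hν i).2⟩

variable (s : Set ι) [DecidablePred (· ∈ s)]

lemma sum_prod_mul_mul_eq_subtype_of_dependsOn (ν : ι → W → ℝ) {f g : (ι → W) → ℝ}
    (hf : DependsOn f s) (hg : DependsOn g sᶜ) (D₀ : ι → W) :
    ∑ D, (∏ i, ν i (D i)) * (f D * g D)
      = (∑ x, (∏ i : {i // i ∈ s}, ν i (x i)) *
            f ((Equiv.piEquivPiSubtypeProd (· ∈ s) _).symm (x, fun i => D₀ i))) *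
          ∑ y, (∏ i : {i // i ∉ s}, ν i (y i)) *
            g ((Equiv.piEquivPiSubtypeProd (· ∈ s) _).symm (fun i => D₀ i, y)) := by
  set e := (Equiv.piEquivPiSubtypeProd (· ∈ s) fun _ => W).symm
  have hsplit : ∀ x y, ∏ i, ν i (e (x, y) i)
      = (∏ i : {i // i ∈ s}, ν i (x i)) * ∏ i : {i // i ∉ s}, ν i (y i) := by
    intro x y
    rw [← Fintype.prod_subtype_mul_prod_subtype (· ∈ s)]
    congr 1 <;> exact prod_congr rfl fun i _ => by simp [e, i.2]
  have hfx : ∀ x y, f (e (x, y)) = f (e (x, fun i => D₀ i)) := fun x y =>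
    hf fun i hi => by simp [e, hi]
  have hgy : ∀ x y, g (e (x, y)) = g (e (fun i => D₀ i, y)) := fun x y =>
    hg fun i hi => by simp [e, Set.notMem_of_mem_compl hi]
  rw [← e.sum_comp, Fintype.sum_prod_type, Fintype.sum_mul_sum]
  refine sum_congr rfl fun x _ => sum_congr rfl fun y _ => ?_
  rw [hsplit, hfx, hgy]
  ring

lemma sum_prod_mul_mul_eq_mul_of_dependsOn {ν : ι → W → ℝ} (hν : ∀ i, ∑ w, ν i w = 1)
    {f g : (ι → W) → ℝ} (hf : DependsOn f s) (hg : DependsOn g sᶜ) :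
    ∑ D, (∏ i, ν i (D i)) * (f D * g D)
      = (∑ D, (∏ i, ν i (D i)) * f D) * ∑ D, (∏ i, ν i (D i)) * g D := by
  rcases isEmpty_or_nonempty (ι → W) with hempty | ⟨⟨D₀⟩⟩
  · simp
  have hf1 := sum_prod_mul_mul_eq_subtype_of_dependsOn s ν hf (dependsOn_one sᶜ) D₀
  have h1g := sum_prod_mul_mul_eq_subtype_of_dependsOn s ν (dependsOn_one s) hg D₀
  simp only [mul_one, one_mul, sum_prod_apply_eq_one fun i : {i // i ∈ s} => hν i,
    sum_prod_apply_eq_one fun i : {i // i ∉ s} => hν i] at hf1 h1g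
  rw [sum_prod_mul_mul_eq_subtype_of_dependsOn s ν hf hg D₀, hf1, h1g]

lemma sum_prod_mul_congr_of_dependsOn {ν ν' : ι → W → ℝ} (hν : ∀ i, ∑ w, ν i w = 1)
    (hν' : ∀ i, ∑ w, ν' i w = 1) (hνν' : ∀ i ∈ s, ν i = ν' i) {f : (ι → W) → ℝ}
    (hf : DependsOn f s) :
    ∑ D, (∏ i, ν i (D i)) * f D = ∑ D, (∏ i, ν' i (D i)) * f D := by
  rcases isEmpty_or_nonempty (ι → W) with hempty | ⟨⟨D₀⟩⟩
  · simp
  have hf1 := sum_prod_mul_mul_eq_subtype_of_dependsOn s ν hf (dependsOn_one sᶜ) D₀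
  have hf1' := sum_prod_mul_mul_eq_subtype_of_dependsOn s ν' hf (dependsOn_one sᶜ) D₀
  simp only [mul_one, sum_prod_apply_eq_one fun i : {i // i ∉ s} => hν i,
    sum_prod_apply_eq_one fun i : {i // i ∉ s} => hν' i] at hf1 hf1'
  rw [hf1, hf1']
  refine sum_congr rfl fun x _ => ?_
  rw [prod_congr rfl fun i _ => by rw [hνν' i i.2]]

end ProductMeasure

section Template

variable {W A : Type*} [Fintype W] [DecidableEq W] {n m : ℕ}

lemma condProd_eq_prod_update (μi : Fin n → W → ℝ) (j : Fin n) (v : W) :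
    condProd μi j v = fun D => ∏ i, update μi j (Pi.single v 1) i (D i) := by
  funext D
  refine prod_congr rfl fun i _ => ?_
  rcases eq_or_ne i j with rfl | h
  · simp [Pi.single_apply]
  · simp [h]

lemma isPMF_condProd {μi : Fin n → W → ℝ} (hμi : ∀ i, IsPMF (μi i)) (j : Fin n) (v : W) :
    IsPMF (condProd μi j v) := by
  rw [condProd_eq_prod_update]
  refine IsPMF.pi fun i => ?_
  rcases eq_or_ne i j with rfl | h
  · simpa using isPMF_single v
  · simpa [h] using hμi i

lemma sum_condProd_mul_prod_eq {μi : Fin n → W → ℝ} (hμi : ∀ i, ∑ w, μi i w = 1)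
    {τ : Fin m → Finset (Fin n)} (hdisj : ∀ k l, k ≠ l → Disjoint (τ k) (τ l))
    {G : Fin m → (Fin n → W) → A → ℝ} (hdep : ∀ k, DependsOn (G k) (τ k))
    {j : Fin n} {k : Fin m} (hj : j ∈ τ k) (u w : W) (a : Fin m → A) :
    ∑ D, condProd μi j u D * ∏ l, G l D (a l)
      = pushKer (condProd μi j u) (G k) (a k)
        * pushKer (condProd μi j w) (fun D c => ∏ l : {l // l ≠ k}, G l D (c l))
            fun l => a l := by
  have hν : ∀ u i, ∑ x, update μi j (Pi.single u 1) i x = 1 := by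
    intro u i
    rcases eq_or_ne i j with rfl | h
    · simp
    · simp [h, hμi i]
  have hf : DependsOn (fun D => G k D (a k)) (τ k) := fun D D' h => congrFun (hdep k h) (a k)
  have hg : DependsOn (fun D => ∏ l : {l // l ≠ k}, G l D (a l)) (↑(τ k))ᶜ :=
    fun D D' h => prod_congr rfl fun l _ => congrFun (hdep l fun i hi =>
      h i (disjoint_left.mp (hdisj l k l.2) hi)) (a l)
  simp only [Fintype.prod_eq_mul_prod_subtype_ne _ k, _root_.pushKer, condProd_eq_prod_update]
  rw [sum_prod_mul_mul_eq_mul_of_dependsOn _ (hν u) hf hg,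
    sum_prod_mul_congr_of_dependsOn _ (hν u) (hν w) ?_ hg]
  intro i hi
  have hij : i ≠ j := fun h => hi (h ▸ hj)
  simp [hij]

end Template

theorem nonadaptive_fixed_template_hsDiv_eq_critical_block_general
    {W A : Type*} [Fintype W] [DecidableEq W] [Fintype A]
    {n m : ℕ}
    (μi : Fin n → W → ℝ) (hμi : ∀ i, IsPMF (μi i))
    (τ : Fin m → Finset (Fin n))
    (hdisj : ∀ k l, k ≠ l → Disjoint (τ k) (τ l))
    (G : Fin m → (Fin n → W) → A → ℝ)
    (hG : ∀ k D, IsPMF (G k D))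
    (hdep : ∀ k (D D' : Fin n → W), (∀ i ∈ τ k, D i = D' i) → G k D = G k D')
    (j : Fin n) (k : Fin m) (hj : j ∈ τ k)
    (v w : W) (ε : ℝ) :
    hsDiv ε
      (fun a : Fin m → A => ∑ D : Fin n → W, condProd μi j v D * ∏ l, G l D (a l))
      (fun a : Fin m → A => ∑ D : Fin n → W, condProd μi j w D * ∏ l, G l D (a l))
      = hsDiv ε (pushKer (condProd μi j v) (G k)) (pushKer (condProd μi j w) (G k)) := by
  set R := pushKer (condProd μi j w) fun D (c : {l // l ≠ k} → A) =>
    ∏ l : {l // l ≠ k}, G l D (c l)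
  have hR : IsPMF R := (isPMF_condProd hμi j w).pushKer fun D => IsPMF.pi fun l => hG l D
  have hjoint : ∀ u, (fun a : Fin m → A => ∑ D, condProd μi j u D * ∏ l, G l D (a l))
      = (fun z => pushKer (condProd μi j u) (G k) z.1 * R z.2) ∘ Equiv.funSplitAt k A :=
    fun u => funext fun a => sum_condProd_mul_prod_eq (fun i => (hμi i).2) hdisj
      (fun k _ _ h => hdep k _ _ h) hj u w a
  rw [hjoint v, hjoint w, hsDiv_comp_equiv, hsDiv_mul_right_of_isPMF _ _ _ hR]

theorem nonadaptive_fixed_template_hsDiv_eq_critical_block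
    {W A : Type*} [Fintype W] [DecidableEq W] [Fintype A]
    {n m : ℕ}
    (μi : Fin n → W → ℝ) (hμi : ∀ i, IsPMF (μi i))
    (τ : Fin m → Finset (Fin n))
    (hdisj : ∀ k l, k ≠ l → Disjoint (τ k) (τ l))
    (G : Fin m → (Fin n → W) → A → ℝ)
    (hG : ∀ k D, IsPMF (G k D))
    (hdep : ∀ k (D D' : Fin n → W), (∀ i ∈ τ k, D i = D' i) → G k D = G k D')
    (j : Fin n) (k : Fin m) (hj : j ∈ τ k)
    (v w : W) (ε : ℝ) (hε : 0 ≤ ε) :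
    hsDiv ε
      (fun a : Fin m → A => ∑ D : Fin n → W, condProd μi j v D * ∏ l, G l D (a l))
      (fun a : Fin m → A => ∑ D : Fin n → W, condProd μi j w D * ∏ l, G l D (a l))
      = hsDiv ε (pushKer (condProd μi j v) (G k)) (pushKer (condProd μi j w) (G k)) :=
  nonadaptive_fixed_template_hsDiv_eq_critical_block_general μi hμi τ hdisj G hG hdep j k hj v w ε
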